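/- Let m : 𝒜 ⊗_ℂ 𝒜 → 𝒜 be the ℂ-linear multiplication map m(a⊗b) = ab. Then for every a ∈ 𝒜 one has m((S⊗id)(Δ(a))) = ε(a)·1 = m((id⊗S)(Δ(a))), i.e. the antipode S is a two-sided convolution inverse of the identity on Pol(SU_q(2)). -/

import Mathlib

open scoped TensorProduct

noncomputable section

/-- The monomial family `α^n γ^m (γ*)^k` (for `n ≥ 0`) resp. `(α*)^{-n} γ^m (γ*)^k`
(for `n < 0`), indexed by `(n, m, k) ∈ ℤ × ℕ × ℕ`. -/
def suqMono {A : Type*} [Ring A] [StarRing A] (a g : A) (i : ℤ × ℕ × ℕ) : A :=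
  (if 0 ≤ i.1 then a ^ i.1.toNat else (star a) ^ (-i.1).toNat) * g ^ i.2.1 * (star g) ^ i.2.2

/-- The degree-`p` homogeneous component `𝒜_p`: the `ℂ`-span of the basis monomials with
`m - k = p`. -/
def suqHomog {A : Type*} [Ring A] [Algebra ℂ A] [StarRing A] (a g : A) (p : ℤ) :
    Submodule ℂ A :=
  Submodule.span ℂ
    {x | ∃ i : ℤ × ℕ × ℕ, (i.2.1 : ℤ) - (i.2.2 : ℤ) = p ∧ x = suqMono a g i}

/-- The defining relations of `Pol(SU_q(2))`. -/
def SUqRel {A : Type*} [Ring A] [Algebra ℂ A] [StarRing A] (q : ℂ) (a g : A) : Prop :=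
  star a * a + star g * g = 1 ∧
  a * star a + ((‖q‖ : ℂ) ^ 2) • (star g * g) = 1 ∧
  g * star g = star g * g ∧
  a * g = (starRingEnd ℂ q) • (g * a) ∧
  a * star g = q • (star g * a)

/-- The monomials form a `ℂ`-basis. -/
def SUqBasis {A : Type*} [Ring A] [Algebra ℂ A] [StarRing A] (a g : A) : Prop :=
  LinearIndependent ℂ (suqMono a g) ∧
  Submodule.span ℂ (Set.range (suqMono a g)) = ⊤

/-- The characterizing properties of the antipode `S`. -/
def SUqAntipode {A : Type*} [Ring A] [Algebra ℂ A] [StarRing A] (q : ℂ) (a g : A)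
    (S : A →ₗ[ℂ] A) : Prop :=
  S 1 = 1 ∧ S a = star a ∧ S (star a) = a ∧
  S g = (-(starRingEnd ℂ q)) • g ∧ S (star g) = (-q⁻¹) • star g ∧
  (∀ p : ℤ, ∀ x ∈ suqHomog a g p, S x ∈ suqHomog a g p) ∧
  (∀ p r : ℤ, ∀ x ∈ suqHomog a g p, ∀ y ∈ suqHomog a g r,
    S (x * y) = ((q / starRingEnd ℂ q) ^ (-(p * r))) • (S y * S x))

/-- The braided multiplication on `𝒜 ⊗ 𝒜`. -/
def SUqBraidedMul {A : Type*} [Ring A] [Algebra ℂ A] [StarRing A] (q : ℂ) (a g : A)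
    (μ : A ⊗[ℂ] A →ₗ[ℂ] A ⊗[ℂ] A →ₗ[ℂ] A ⊗[ℂ] A) : Prop :=
  ∀ (x w : A) (r s : ℤ), ∀ y ∈ suqHomog a g r, ∀ z ∈ suqHomog a g s,
    μ (x ⊗ₜ[ℂ] y) (z ⊗ₜ[ℂ] w)
      = ((q / starRingEnd ℂ q) ^ (-(r * s))) • ((x * z) ⊗ₜ[ℂ] (y * w))

/-- The characterizing properties of the comultiplication `Δ` (as a unital algebra
homomorphism into the braided tensor square with multiplication `μ`). -/
def SUqComul {A : Type*} [Ring A] [Algebra ℂ A] [StarRing A] (q : ℂ) (a g : A)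
    (μ : A ⊗[ℂ] A →ₗ[ℂ] A ⊗[ℂ] A →ₗ[ℂ] A ⊗[ℂ] A) (Δ : A →ₗ[ℂ] A ⊗[ℂ] A) : Prop :=
  Δ 1 = 1 ⊗ₜ[ℂ] 1 ∧ (∀ x y : A, Δ (x * y) = μ (Δ x) (Δ y)) ∧
  Δ a = a ⊗ₜ[ℂ] a - q • ((star g) ⊗ₜ[ℂ] g) ∧
  Δ g = g ⊗ₜ[ℂ] a + (star a) ⊗ₜ[ℂ] g ∧
  Δ (star a) = (star a) ⊗ₜ[ℂ] (star a) - q • (g ⊗ₜ[ℂ] (star g)) ∧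
  Δ (star g) = (star g) ⊗ₜ[ℂ] (star a) + a ⊗ₜ[ℂ] (star g)

/-- The braided flip `c` on `𝒜 ⊗ 𝒜`. -/
def SUqFlip {A : Type*} [Ring A] [Algebra ℂ A] [StarRing A] (q : ℂ) (a g : A)
    (c : A ⊗[ℂ] A →ₗ[ℂ] A ⊗[ℂ] A) : Prop :=
  ∀ (p r : ℤ), ∀ x ∈ suqHomog a g p, ∀ y ∈ suqHomog a g r,
    c (x ⊗ₜ[ℂ] y) = ((q / starRingEnd ℂ q) ^ (-(p * r))) • (y ⊗ₜ[ℂ] x)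

/-- The Haar functional, defined on the basis. -/
def SUqHaar {A : Type*} [Ring A] [Algebra ℂ A] [StarRing A] (q : ℂ) (a g : A)
    (h : A →ₗ[ℂ] ℂ) : Prop :=
  ∀ i : ℤ × ℕ × ℕ, h (suqMono a g i) =
    if i.1 = 0 ∧ i.2.1 = i.2.2
    then (1 - (‖q‖ : ℂ) ^ 2) / (1 - (‖q‖ : ℂ) ^ (2 * (i.2.1 + 1)))
    else 0

/-!
Both identities are linear in `x` and the monomials span `𝒜`, so it suffices to check them on
the generators, where they are the defining relations, and to show that they pass to products of
homogeneous elements `x ∈ 𝒜_p`, `y ∈ 𝒜_r`. For summands `u₁ ⊗ u₂` of `Δ x` (`u₁ ∈ 𝒜_s`,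
`u₂ ∈ 𝒜_{p-s}`) and `v₁ ⊗ v₂` of `Δ y` (`v₁ ∈ 𝒜_t`), the braided product contributes the twist
`ζ^{-(p-s)t}` and the braided anti-multiplicativity `S(u₁v₁) = ζ^{-st} S(v₁) S(u₁)` contributes
`ζ^{-st}`: together `ζ^{-pt}`, independent of how `Δ x` is split. Hence
`m(S ⊗ id)Δ(xy) = Σ ζ^{-pt} S(v₁) · ε(x) · v₂`, and since `ε` vanishes on `𝒜_p` for `p ≠ 0` the
twist drops out, leaving `ε(x) · m(S ⊗ id)Δ(y) = ε(x) ε(y)`. The right identity is symmetric.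
These degrees are available because the commutation relations make `𝒜` a graded algebra
(`𝒜_p 𝒜_r ⊆ 𝒜_{p+r}`), and hence `Δ` maps `𝒜_p` into the total degree `p` part of `𝒜 ⊗ 𝒜`.
-/

theorem pow_mul_eq_smul_mul_pow {R A : Type*} [CommSemiring R] [Semiring A] [Algebra R A]
    {t u : A} {z : R} (h : t * u = z • (u * t)) (n : ℕ) :
    t ^ n * u = z ^ n • (u * t ^ n) := by
  induction n with
  | zero => simp
  | succ n ih =>
    rw [pow_succ, mul_assoc, h, mul_smul_comm, ← mul_assoc, ih, smul_mul_assoc, smul_smul,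
      mul_assoc, ← pow_succ, ← pow_succ']

theorem mul_pow_mul_pow_mul_eq_smul {R A : Type*} [CommSemiring R] [Semiring A] [Algebra R A]
    {x t g h : A} {z w : R} (hg : g * t = z • (t * g)) (hh : h * t = w • (t * h)) (m k : ℕ) :
    x * g ^ m * h ^ k * t = (w ^ k * z ^ m) • (x * t * g ^ m * h ^ k) := by
  rw [mul_assoc, pow_mul_eq_smul_mul_pow hh, mul_smul_comm, ← mul_assoc, mul_assoc x,
    pow_mul_eq_smul_mul_pow hg, mul_smul_comm, smul_mul_assoc, smul_smul, ← mul_assoc]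

theorem Commute.mul_mul_mul_pow_mul_pow {M : Type*} [Monoid M] {g h : M} (hc : Commute g h)
    (x : M) (m k : ℕ) : x * (h * g) * g ^ m * h ^ k = x * g ^ (m + 1) * h ^ (k + 1) := by
  have hgh : h * g ^ (m + 1) = g ^ (m + 1) * h := ((hc.pow_left (m + 1)).eq).symm
  calc x * (h * g) * g ^ m * h ^ k = x * (h * g ^ (m + 1)) * h ^ k := by
        simp only [pow_succ', mul_assoc]
    _ = x * (g ^ (m + 1) * h) * h ^ k := by rw [hgh]
    _ = x * g ^ (m + 1) * h ^ (k + 1) := by simp only [pow_succ' h, mul_assoc]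

section GradedConvolution

open TensorProduct LinearMap

variable {A : Type*} [Ring A] [Algebra ℂ A] (H : ℤ → Submodule ℂ A)

def gradedTensor (p : ℤ) : Submodule ℂ (A ⊗[ℂ] A) :=
  Submodule.span ℂ {w | ∃ s : ℤ, ∃ u ∈ H s, ∃ v ∈ H (p - s), w = u ⊗ₜ[ℂ] v}

def IsBraidedMul (ζ : ℂ) (μ : A ⊗[ℂ] A →ₗ[ℂ] A ⊗[ℂ] A →ₗ[ℂ] A ⊗[ℂ] A) : Prop :=
  ∀ (x w : A) (r s : ℤ), ∀ y ∈ H r, ∀ z ∈ H s,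
    μ (x ⊗ₜ[ℂ] y) (z ⊗ₜ[ℂ] w) = ζ ^ (-(r * s)) • ((x * z) ⊗ₜ[ℂ] (y * w))

def IsBraidedAntiMul (ζ : ℂ) (S : A →ₗ[ℂ] A) : Prop :=
  ∀ p r : ℤ, ∀ x ∈ H p, ∀ y ∈ H r, S (x * y) = ζ ^ (-(p * r)) • (S y * S x)

def IsAntipodeAt (Δ : A →ₗ[ℂ] A ⊗[ℂ] A) (S : A →ₗ[ℂ] A) (ε : A →ₐ[ℂ] ℂ) (x : A) : Prop :=
  mul' ℂ A (map S id (Δ x)) = ε x • 1 ∧ mul' ℂ A (map id S (Δ x)) = ε x • 1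

variable {H} {ζ : ℂ} {μ : A ⊗[ℂ] A →ₗ[ℂ] A ⊗[ℂ] A →ₗ[ℂ] A ⊗[ℂ] A} {S : A →ₗ[ℂ] A}

theorem tmul_mem_gradedTensor {s t p : ℤ} {u v : A} (hu : u ∈ H s) (hv : v ∈ H t)
    (hp : s + t = p) : u ⊗ₜ[ℂ] v ∈ gradedTensor H p :=
  Submodule.subset_span ⟨s, u, hu, v, by rwa [← hp, add_sub_cancel_left], rfl⟩

theorem mul_mem_gradedTensor [SetLike.GradedMul H] (hμ : IsBraidedMul H ζ μ) {p r : ℤ}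
    {u v : A ⊗[ℂ] A} (hu : u ∈ gradedTensor H p) (hv : v ∈ gradedTensor H r) :
    μ u v ∈ gradedTensor H (p + r) := by
  have hle : Submodule.map₂ μ (gradedTensor H p) (gradedTensor H r) ≤ gradedTensor H (p + r) := by
    rw [gradedTensor, gradedTensor, Submodule.map₂_span_span, Submodule.span_le]
    rintro _ ⟨_, ⟨s, u₁, hu₁, u₂, hu₂, rfl⟩, _, ⟨s', v₁, hv₁, v₂, hv₂, rfl⟩, rfl⟩
    show μ _ _ ∈ _
    rw [hμ u₁ v₂ _ _ u₂ hu₂ v₁ hv₁]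
    exact Submodule.smul_mem _ _ (tmul_mem_gradedTensor (SetLike.mul_mem_graded hu₁ hv₁)
      (SetLike.mul_mem_graded hu₂ hv₂) (by ring))
  exact hle (Submodule.apply_mem_map₂ μ hu hv)

theorem mul'_map_braidedMul_tmul_left (hζ : ζ ≠ 0) (hμ : IsBraidedMul H ζ μ)
    (hS : IsBraidedAntiMul H ζ S) {p r : ℤ} {u : A ⊗[ℂ] A} (hu : u ∈ gradedTensor H p)
    {v₁ : A} (hv₁ : v₁ ∈ H r) (v₂ : A) :
    mul' ℂ A (map S id (μ u (v₁ ⊗ₜ[ℂ] v₂))) =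
      ζ ^ (-(p * r)) • (S v₁ * mul' ℂ A (map S id u) * v₂) := by
  induction hu using Submodule.span_induction with
  | mem w hw =>
    obtain ⟨s, u₁, hu₁, u₂, hu₂, rfl⟩ := hw
    rw [hμ u₁ v₂ (p - s) r u₂ hu₂ v₁ hv₁, map_smul, map_smul]
    simp only [map_tmul, mul'_apply, id_coe, id_eq]
    rw [hS s r u₁ hu₁ v₁ hv₁, smul_mul_assoc, smul_smul, ← zpow_add₀ hζ]
    congr 1
    · ring_nf
    · noncomm_ring
  | zero => simp
  | add x y _ _ hx hy =>
    simp only [map_add, LinearMap.add_apply, hx, hy, mul_add, add_mul, smul_add]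
  | smul z x _ hx =>
    simp only [map_smul, LinearMap.smul_apply, hx, mul_smul_comm, smul_mul_assoc, smul_smul]
    rw [mul_comm]

theorem mul'_map_braidedMul_tmul_right (hζ : ζ ≠ 0) (hμ : IsBraidedMul H ζ μ)
    (hS : IsBraidedAntiMul H ζ S) {p r : ℤ} {v : A ⊗[ℂ] A} (hv : v ∈ gradedTensor H r)
    (u₁ : A) {u₂ : A} (hu₂ : u₂ ∈ H p) :
    mul' ℂ A (map id S (μ (u₁ ⊗ₜ[ℂ] u₂) v)) =
      ζ ^ (-(p * r)) • (u₁ * mul' ℂ A (map id S v) * S u₂) := by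
  induction hv using Submodule.span_induction with
  | mem w hw =>
    obtain ⟨s, v₁, hv₁, v₂, hv₂, rfl⟩ := hw
    rw [hμ u₁ v₂ p s u₂ hu₂ v₁ hv₁, map_smul, map_smul]
    simp only [map_tmul, mul'_apply, id_coe, id_eq]
    rw [hS p (r - s) u₂ hu₂ v₂ hv₂, mul_smul_comm, smul_smul, ← zpow_add₀ hζ]
    congr 1
    · ring_nf
    · noncomm_ring
  | zero => simp
  | add x y _ _ hx hy => simp only [map_add, hx, hy, mul_add, add_mul, smul_add]
  | smul z x _ hx =>
    simp only [map_smul, hx, mul_smul_comm, smul_mul_assoc, smul_smul]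
    rw [mul_comm]

theorem mul'_map_comul_mul_left (hζ : ζ ≠ 0) (hμ : IsBraidedMul H ζ μ)
    (hS : IsBraidedAntiMul H ζ S) {Δ : A →ₗ[ℂ] A ⊗[ℂ] A}
    (hΔ : ∀ x y, Δ (x * y) = μ (Δ x) (Δ y)) (ε : A →ₐ[ℂ] ℂ) {p r : ℤ} {x y : A}
    (hΔx : Δ x ∈ gradedTensor H p) (hΔy : Δ y ∈ gradedTensor H r) (hεx : p ≠ 0 → ε x = 0)
    (hx : mul' ℂ A (map S id (Δ x)) = ε x • 1) (hy : mul' ℂ A (map S id (Δ y)) = ε y • 1) :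
    mul' ℂ A (map S id (Δ (x * y))) = ε (x * y) • 1 := by
  have factor_counit : ∀ v ∈ gradedTensor H r,
      mul' ℂ A (map S id (μ (Δ x) v)) = ε x • mul' ℂ A (map S id v) := by
    intro v hv
    induction hv using Submodule.span_induction with
    | mem w hw =>
      obtain ⟨s, v₁, hv₁, v₂, -, rfl⟩ := hw
      rw [mul'_map_braidedMul_tmul_left hζ hμ hS hΔx hv₁, hx]
      simp only [map_tmul, mul'_apply, id_coe, id_eq, mul_smul_comm, smul_mul_assoc, mul_one,
        smul_smul]
      rcases eq_or_ne p 0 with rfl | hp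
      · simp
      · simp [hεx hp]
    | zero => simp
    | add v v' _ _ hv hv' => simp only [map_add, hv, hv', smul_add]
    | smul z v _ hv => simp only [map_smul, hv, smul_comm z]
  rw [hΔ, factor_counit _ hΔy, hy, smul_smul, map_mul]

theorem mul'_map_comul_mul_right (hζ : ζ ≠ 0) (hμ : IsBraidedMul H ζ μ)
    (hS : IsBraidedAntiMul H ζ S) {Δ : A →ₗ[ℂ] A ⊗[ℂ] A}
    (hΔ : ∀ x y, Δ (x * y) = μ (Δ x) (Δ y)) (ε : A →ₐ[ℂ] ℂ) {p r : ℤ} {x y : A}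
    (hΔx : Δ x ∈ gradedTensor H p) (hΔy : Δ y ∈ gradedTensor H r) (hεy : r ≠ 0 → ε y = 0)
    (hx : mul' ℂ A (map id S (Δ x)) = ε x • 1) (hy : mul' ℂ A (map id S (Δ y)) = ε y • 1) :
    mul' ℂ A (map id S (Δ (x * y))) = ε (x * y) • 1 := by
  have factor_counit : ∀ u ∈ gradedTensor H p,
      mul' ℂ A (map id S (μ u (Δ y))) = ε y • mul' ℂ A (map id S u) := by
    intro u hu
    induction hu using Submodule.span_induction with
    | mem w hw =>
      obtain ⟨s, u₁, -, u₂, hu₂, rfl⟩ := hw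
      rw [mul'_map_braidedMul_tmul_right hζ hμ hS hΔy u₁ hu₂, hy]
      simp only [map_tmul, mul'_apply, id_coe, id_eq, mul_smul_comm, smul_mul_assoc, mul_one,
        smul_smul]
      rcases eq_or_ne r 0 with rfl | hr
      · simp
      · simp [hεy hr]
    | zero => simp
    | add u u' _ _ hu hu' => simp only [map_add, LinearMap.add_apply, hu, hu', smul_add]
    | smul z u _ hu => simp only [map_smul, LinearMap.smul_apply, hu, smul_comm z]
  rw [hΔ, factor_counit _ hΔx, hx, smul_smul, mul_comm, map_mul]

theorem IsAntipodeAt.mul (hζ : ζ ≠ 0) (hμ : IsBraidedMul H ζ μ) (hS : IsBraidedAntiMul H ζ S)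
    {Δ : A →ₗ[ℂ] A ⊗[ℂ] A} (hΔ : ∀ x y, Δ (x * y) = μ (Δ x) (Δ y)) {ε : A →ₐ[ℂ] ℂ}
    {p r : ℤ} {x y : A} (hΔx : Δ x ∈ gradedTensor H p) (hΔy : Δ y ∈ gradedTensor H r)
    (hεx : p ≠ 0 → ε x = 0) (hεy : r ≠ 0 → ε y = 0) (hx : IsAntipodeAt Δ S ε x)
    (hy : IsAntipodeAt Δ S ε y) : IsAntipodeAt Δ S ε (x * y) :=
  ⟨mul'_map_comul_mul_left hζ hμ hS hΔ ε hΔx hΔy hεx hx.1 hy.1,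
    mul'_map_comul_mul_right hζ hμ hS hΔ ε hΔx hΔy hεy hx.2 hy.2⟩

theorem isAntipodeAt_of_span_eq_top {Δ : A →ₗ[ℂ] A ⊗[ℂ] A} {ε : A →ₐ[ℂ] ℂ} {s : Set A}
    (hs : Submodule.span ℂ s = ⊤) (h : ∀ x ∈ s, IsAntipodeAt Δ S ε x) (x : A) :
    IsAntipodeAt Δ S ε x := by
  have ext (T : A ⊗[ℂ] A →ₗ[ℂ] A ⊗[ℂ] A) (hT : ∀ y ∈ s, mul' ℂ A (T (Δ y)) = ε y • 1) :
      mul' ℂ A (T (Δ x)) = ε x • 1 :=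
    LinearMap.congr_fun (LinearMap.ext_on hs (f := mul' ℂ A ∘ₗ T ∘ₗ Δ)
      (g := (ε : A →ₗ[ℂ] ℂ).smulRight 1) hT) x
  exact ⟨ext _ fun y hy => (h y hy).1, ext _ fun y hy => (h y hy).2⟩

end GradedConvolution

section Monomials

variable {A : Type*} [Ring A] [StarRing A]

def suqAlphaPow (a : A) (n : ℤ) : A :=
  if 0 ≤ n then a ^ n.toNat else star a ^ (-n).toNat

theorem suqMono_eq (a g : A) (n : ℤ) (m k : ℕ) :
    suqMono a g (n, m, k) = suqAlphaPow a n * g ^ m * star g ^ k := rfl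

theorem suqAlphaPow_natCast (a : A) (j : ℕ) : suqAlphaPow a j = a ^ j := by
  simp [suqAlphaPow]

theorem suqAlphaPow_neg_natCast (a : A) (j : ℕ) : suqAlphaPow a (-j) = star a ^ j := by
  rcases j.eq_zero_or_pos with rfl | hj
  · simp [suqAlphaPow]
  · simp [suqAlphaPow, hj.ne']

theorem suqMono_induction (a g : A) {P : ℤ → A → Prop} (one : P 0 1) (ha : P 0 a)
    (has : P 0 (star a)) (hg : P 1 g) (hgs : P (-1) (star g))
    (mul : ∀ {p r x y}, P p x → P r y → P (p + r) (x * y)) (i : ℤ × ℕ × ℕ) :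
    P (i.2.1 - i.2.2) (suqMono a g i) := by
  have pow : ∀ {d t}, P d t → ∀ j : ℕ, P (j * d) (t ^ j) := by
    intro d t ht j
    induction j with
    | zero => simpa using one
    | succ j ih => simpa [pow_succ, add_mul] using mul ih ht
  obtain ⟨n, m, k⟩ := i
  have hα : P 0 (suqAlphaPow a n) := by
    unfold suqAlphaPow
    split
    · simpa using pow ha n.toNat
    · simpa using pow has (-n).toNat
  simpa [suqMono_eq, sub_eq_add_neg] using mul (mul hα (pow hg m)) (pow hgs k)

end Monomials

section Grading

variable {A : Type*} [Ring A] [Algebra ℂ A] [StarRing A]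

theorem suqMono_mem_suqHomog (a g : A) (n : ℤ) {m k : ℕ} {p : ℤ} (h : (m : ℤ) - k = p) :
    suqMono a g (n, m, k) ∈ suqHomog a g p :=
  Submodule.subset_span ⟨(n, m, k), h, rfl⟩

variable {a g : A}

theorem one_mem_suqHomog : (1 : A) ∈ suqHomog a g 0 := by
  simpa [suqMono] using suqMono_mem_suqHomog a g 0 (m := 0) (k := 0) rfl

theorem alpha_mem_suqHomog : a ∈ suqHomog a g 0 := by
  simpa [suqMono] using suqMono_mem_suqHomog a g 1 (m := 0) (k := 0) rfl

theorem star_alpha_mem_suqHomog : star a ∈ suqHomog a g 0 := by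
  simpa [suqMono] using suqMono_mem_suqHomog a g (-1) (m := 0) (k := 0) rfl

theorem gamma_mem_suqHomog : g ∈ suqHomog a g 1 := by
  simpa [suqMono] using suqMono_mem_suqHomog a g 0 (m := 1) (k := 0) rfl

theorem star_gamma_mem_suqHomog : star g ∈ suqHomog a g (-1) := by
  simpa [suqMono] using suqMono_mem_suqHomog a g 0 (m := 0) (k := 1) rfl

theorem suqAlphaPow_mul_star_gamma_mul_gamma_mem (hg : Commute g (star g)) (n : ℤ) (m k : ℕ) :
    suqAlphaPow a n * (star g * g) * g ^ m * star g ^ k ∈ suqHomog a g (m - k) := by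
  rw [hg.mul_mul_mul_pow_mul_pow, ← suqMono_eq]
  exact suqMono_mem_suqHomog a g n (by push_cast; ring)

theorem suqAlphaPow_mul_alpha_mem (h1 : star a * a + star g * g = 1) (hg : Commute g (star g))
    (n : ℤ) (m k : ℕ) : suqAlphaPow a n * a * g ^ m * star g ^ k ∈ suqHomog a g (m - k) := by
  rcases le_or_gt 0 n with hn | hn
  · lift n to ℕ using hn
    rw [suqAlphaPow_natCast, ← pow_succ, ← suqAlphaPow_natCast, ← suqMono_eq]
    exact suqMono_mem_suqHomog a g _ rfl
  · obtain ⟨j, rfl⟩ : ∃ j : ℕ, n = -(j + 1 : ℕ) := ⟨(-n).toNat - 1, by omega⟩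
    rw [suqAlphaPow_neg_natCast, pow_succ, mul_assoc _ (star a), eq_sub_of_add_eq h1,
      ← suqAlphaPow_neg_natCast, mul_sub, mul_one, sub_mul, sub_mul]
    exact sub_mem (suqMono_mem_suqHomog a g _ rfl)
      (suqAlphaPow_mul_star_gamma_mul_gamma_mem hg _ m k)

theorem suqAlphaPow_mul_star_alpha_mem {c : ℂ} (h2 : a * star a + c • (star g * g) = 1)
    (hg : Commute g (star g)) (n : ℤ) (m k : ℕ) :
    suqAlphaPow a n * star a * g ^ m * star g ^ k ∈ suqHomog a g (m - k) := by
  rcases le_or_gt 0 n with hn | hn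
  · lift n to ℕ using hn
    rcases n with _ | j
    · simpa [suqMono, suqAlphaPow] using suqMono_mem_suqHomog a g (-1) (m := m) (k := k) rfl
    rw [suqAlphaPow_natCast, pow_succ, mul_assoc _ a, eq_sub_of_add_eq h2,
      ← suqAlphaPow_natCast, mul_sub, mul_one, mul_smul_comm, sub_mul, sub_mul, smul_mul_assoc,
      smul_mul_assoc]
    exact sub_mem (suqMono_mem_suqHomog a g _ rfl)
      (Submodule.smul_mem _ _ (suqAlphaPow_mul_star_gamma_mul_gamma_mem hg _ m k))
  · obtain ⟨j, rfl⟩ : ∃ j : ℕ, n = -j := ⟨(-n).toNat, by omega⟩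
    rw [suqAlphaPow_neg_natCast, ← pow_succ, ← suqAlphaPow_neg_natCast, ← suqMono_eq]
    exact suqMono_mem_suqHomog a g _ rfl

theorem suqHomog_mul_right_mem {t : A} {d : ℤ}
    (ht : ∀ i : ℤ × ℕ × ℕ, suqMono a g i * t ∈ suqHomog a g (i.2.1 - i.2.2 + d)) {p : ℤ}
    {x : A} (hx : x ∈ suqHomog a g p) : x * t ∈ suqHomog a g (p + d) := by
  induction hx using Submodule.span_induction with
  | mem y hy =>
    obtain ⟨i, rfl, rfl⟩ := hy
    exact ht i
  | zero => simp
  | add y z _ _ hy hz => simpa [add_mul] using add_mem hy hz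
  | smul c y _ hy => simpa [smul_mul_assoc] using Submodule.smul_mem _ c hy

end Grading

namespace SUqRel

variable {A : Type*} [Ring A] [Algebra ℂ A] [StarRing A] {q : ℂ} {a g : A} {ε : A →ₐ[ℂ] ℂ}

theorem commute_gamma_star (h : SUqRel q a g) : Commute g (star g) := h.2.2.1

theorem gamma_mul_alpha (h : SUqRel q a g) (hq : q ≠ 0) :
    g * a = (starRingEnd ℂ q)⁻¹ • (a * g) := by
  rw [h.2.2.2.1, smul_smul, inv_mul_cancel₀ ((map_ne_zero _).mpr hq), one_smul]

theorem star_gamma_mul_alpha (h : SUqRel q a g) (hq : q ≠ 0) :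
    star g * a = q⁻¹ • (a * star g) := by
  rw [h.2.2.2.2, smul_smul, inv_mul_cancel₀ hq, one_smul]

theorem gamma_mul_star_alpha [StarModule ℂ A] (h : SUqRel q a g) :
    g * star a = starRingEnd ℂ q • (star a * g) := by
  simpa using congrArg star h.2.2.2.2

theorem star_gamma_mul_star_alpha [StarModule ℂ A] (h : SUqRel q a g) :
    star g * star a = q • (star a * star g) := by
  simpa using congrArg star h.2.2.2.1

theorem counit_star_alpha (h : SUqRel q a g) (hεa : ε a = 1) (hεg : ε g = 0) :
    ε (star a) = 1 := by
  simpa [hεa, hεg] using congrArg ε h.1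

theorem counit_star_gamma (h : SUqRel q a g) (hq : q ≠ 1) (hεa : ε a = 1) :
    ε (star g) = 0 := by
  have h5 := congrArg ε h.2.2.2.2
  simp only [map_mul, map_smul, hεa, one_mul, mul_one, smul_eq_mul] at h5
  have : (1 - q) * ε (star g) = 0 := by linear_combination h5
  exact (mul_eq_zero.mp this).resolve_left (sub_ne_zero.mpr hq.symm)

theorem gradedMul [StarModule ℂ A] (h : SUqRel q a g) (hq : q ≠ 0) :
    SetLike.GradedMul (suqHomog a g) := by
  have hg := h.commute_gamma_star
  have mul_alpha {p x} : x ∈ suqHomog a g p → x * a ∈ suqHomog a g (p + 0) :=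
    suqHomog_mul_right_mem fun ⟨n, m, k⟩ => by
      rw [suqMono_eq, mul_pow_mul_pow_mul_eq_smul (h.gamma_mul_alpha hq)
        (h.star_gamma_mul_alpha hq), add_zero]
      exact Submodule.smul_mem _ _ (suqAlphaPow_mul_alpha_mem h.1 hg n m k)
  have mul_star_alpha {p x} : x ∈ suqHomog a g p → x * star a ∈ suqHomog a g (p + 0) :=
    suqHomog_mul_right_mem fun ⟨n, m, k⟩ => by
      rw [suqMono_eq, mul_pow_mul_pow_mul_eq_smul h.gamma_mul_star_alpha
        h.star_gamma_mul_star_alpha, add_zero]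
      exact Submodule.smul_mem _ _ (suqAlphaPow_mul_star_alpha_mem h.2.1 hg n m k)
  have mul_gamma {p x} : x ∈ suqHomog a g p → x * g ∈ suqHomog a g (p + 1) :=
    suqHomog_mul_right_mem fun ⟨n, m, k⟩ => by
      rw [suqMono_eq, mul_assoc, (hg.symm.pow_left k).eq, ← mul_assoc, mul_assoc _ (g ^ m),
        ← pow_succ, ← suqMono_eq]
      exact suqMono_mem_suqHomog a g n (by push_cast; ring)
  have mul_star_gamma {p x} : x ∈ suqHomog a g p → x * star g ∈ suqHomog a g (p + -1) :=
    suqHomog_mul_right_mem fun ⟨n, m, k⟩ => by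
      rw [suqMono_eq, mul_assoc, ← pow_succ, ← suqMono_eq]
      exact suqMono_mem_suqHomog a g n (by push_cast; ring)
  have mul_mono := suqMono_induction a g
    (P := fun r y => ∀ p, ∀ x ∈ suqHomog a g p, x * y ∈ suqHomog a g (p + r))
    (fun p x hx => by simpa using hx) (fun _ _ => mul_alpha) (fun _ _ => mul_star_alpha)
    (fun _ _ => mul_gamma) (fun _ _ => mul_star_gamma)
    (fun hy hy' p x hx => by simpa [mul_assoc, add_assoc] using hy' _ _ (hy p x hx))
  refine ⟨fun p r x y hx hy => ?_⟩
  induction hy using Submodule.span_induction with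
  | mem y hy =>
    obtain ⟨i, rfl, rfl⟩ := hy
    exact mul_mono i p x hx
  | zero => simp
  | add y z _ _ hy hz => simpa [mul_add] using add_mem hy hz
  | smul c y _ hy => simpa [mul_smul_comm] using Submodule.smul_mem _ c hy

end SUqRel

section SUq

open TensorProduct LinearMap

variable {A : Type*} [Ring A] [Algebra ℂ A] [StarRing A] {q : ℂ} {a g : A}
  {μ : A ⊗[ℂ] A →ₗ[ℂ] A ⊗[ℂ] A →ₗ[ℂ] A ⊗[ℂ] A} {Δ : A →ₗ[ℂ] A ⊗[ℂ] A} {S : A →ₗ[ℂ] A}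
  {ε : A →ₐ[ℂ] ℂ}

theorem counit_eq_zero_of_mem_suqHomog (hεg : ε g = 0) (hεgs : ε (star g) = 0) {p : ℤ}
    (hp : p ≠ 0) {x : A} (hx : x ∈ suqHomog a g p) : ε x = 0 := by
  induction hx using Submodule.span_induction with
  | mem y hy =>
    obtain ⟨⟨n, m, k⟩, hmk, rfl⟩ := hy
    dsimp only at hmk
    rcases (by omega : m ≠ 0 ∨ k ≠ 0) with hm | hk
    · simp [suqMono_eq, hεg, hm]
    · simp [suqMono_eq, hεgs, hk]
  | zero => simp
  | add _ _ _ _ hx hy => simp [hx, hy]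
  | smul c _ _ hx => simp [hx]

theorem SUqComul.map_mem_gradedTensor [SetLike.GradedMul (suqHomog a g)] {ζ : ℂ}
    (hμ : IsBraidedMul (suqHomog a g) ζ μ) (hΔ : SUqComul q a g μ Δ) {p : ℤ} {x : A}
    (hx : x ∈ suqHomog a g p) : Δ x ∈ gradedTensor (suqHomog a g) p := by
  obtain ⟨hΔ1, hΔmul, hΔa, hΔg, hΔas, hΔgs⟩ := hΔ
  have h1 := one_mem_suqHomog (a := a) (g := g)
  have ha := alpha_mem_suqHomog (a := a) (g := g)
  have has := star_alpha_mem_suqHomog (a := a) (g := g)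
  have hg := gamma_mem_suqHomog (a := a) (g := g)
  have hgs := star_gamma_mem_suqHomog (a := a) (g := g)
  have mono := suqMono_induction a g (P := fun p x => Δ x ∈ gradedTensor (suqHomog a g) p)
    (by rw [hΔ1]; exact tmul_mem_gradedTensor h1 h1 (by norm_num))
    (by
      rw [hΔa]
      exact sub_mem (tmul_mem_gradedTensor ha ha (by norm_num))
        (Submodule.smul_mem _ _ (tmul_mem_gradedTensor hgs hg (by norm_num))))
    (by
      rw [hΔas]
      exact sub_mem (tmul_mem_gradedTensor has has (by norm_num))
        (Submodule.smul_mem _ _ (tmul_mem_gradedTensor hg hgs (by norm_num))))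
    (by
      rw [hΔg]
      exact add_mem (tmul_mem_gradedTensor hg ha (by norm_num))
        (tmul_mem_gradedTensor has hg (by norm_num)))
    (by
      rw [hΔgs]
      exact add_mem (tmul_mem_gradedTensor hgs has (by norm_num))
        (tmul_mem_gradedTensor ha hgs (by norm_num)))
    (fun hx hy => by rw [hΔmul]; exact mul_mem_gradedTensor hμ hx hy)
  induction hx using Submodule.span_induction with
  | mem y hy =>
    obtain ⟨i, rfl, rfl⟩ := hy
    exact mono i
  | zero => simp
  | add _ _ _ _ hx hy => rw [map_add]; exact add_mem hx hy
  | smul c _ _ hx => rw [map_smul]; exact Submodule.smul_mem _ c hx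

theorem isAntipodeAt_one (hΔ : SUqComul q a g μ Δ) (hS : SUqAntipode q a g S) :
    IsAntipodeAt Δ S ε 1 := by
  simp [IsAntipodeAt, hΔ.1, hS.1]

theorem isAntipodeAt_alpha (h : SUqRel q a g) (hq : q ≠ 0) (hΔ : SUqComul q a g μ Δ)
    (hS : SUqAntipode q a g S) (hεa : ε a = 1) : IsAntipodeAt Δ S ε a := by
  obtain ⟨-, -, hΔa, -⟩ := hΔ
  obtain ⟨-, hSa, -, hSg, hSgs, -⟩ := hS
  simp only [IsAntipodeAt, hΔa, hSa, hSg, hSgs, hεa, map_sub, map_smul, map_tmul, mul'_apply,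
    id_coe, id_eq, neg_smul, neg_mul, mul_neg, smul_neg, smul_mul_assoc, mul_smul_comm,
    smul_smul, one_smul, sub_neg_eq_add]
  constructor
  · rw [mul_inv_cancel₀ hq, one_smul, h.1]
  · rw [Complex.mul_conj', h.2.1]

theorem isAntipodeAt_star_alpha (h : SUqRel q a g) (hq : q ≠ 0) (hΔ : SUqComul q a g μ Δ)
    (hS : SUqAntipode q a g S) (hεa : ε a = 1) (hεg : ε g = 0) :
    IsAntipodeAt Δ S ε (star a) := by
  obtain ⟨-, -, -, -, hΔas, -⟩ := hΔ
  obtain ⟨-, -, hSas, hSg, hSgs, -⟩ := hS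
  simp only [IsAntipodeAt, hΔas, hSas, hSg, hSgs, h.counit_star_alpha hεa hεg, map_sub, map_smul,
    map_tmul, mul'_apply, id_coe, id_eq, neg_smul, neg_mul, mul_neg, smul_neg, smul_mul_assoc,
    mul_smul_comm, smul_smul, one_smul, sub_neg_eq_add]
  constructor
  · rw [Complex.mul_conj', h.2.2.1, h.2.1]
  · rw [mul_inv_cancel₀ hq, one_smul, h.2.2.1, h.1]

theorem isAntipodeAt_gamma [StarModule ℂ A] (h : SUqRel q a g) (hΔ : SUqComul q a g μ Δ)
    (hS : SUqAntipode q a g S) (hεg : ε g = 0) : IsAntipodeAt Δ S ε g := by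
  obtain ⟨-, -, -, hΔg, -⟩ := hΔ
  obtain ⟨-, hSa, hSas, hSg, -⟩ := hS
  simp only [IsAntipodeAt, hΔg, hSa, hSas, hSg, hεg, map_add, map_tmul, mul'_apply, id_coe,
    id_eq, neg_smul, neg_mul, mul_neg, smul_mul_assoc, mul_smul_comm, zero_smul]
  constructor
  · rw [← h.2.2.2.1, neg_add_cancel]
  · rw [h.gamma_mul_star_alpha, add_neg_cancel]

theorem isAntipodeAt_star_gamma [StarModule ℂ A] (h : SUqRel q a g) (hq : q ≠ 0) (hq1 : q ≠ 1)
    (hΔ : SUqComul q a g μ Δ) (hS : SUqAntipode q a g S) (hεa : ε a = 1) :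
    IsAntipodeAt Δ S ε (star g) := by
  obtain ⟨-, -, -, -, -, hΔgs⟩ := hΔ
  obtain ⟨-, hSa, hSas, -, hSgs, -⟩ := hS
  simp only [IsAntipodeAt, hΔgs, hSa, hSas, hSgs, h.counit_star_gamma hq1 hεa, map_add, map_tmul,
    mul'_apply, id_coe, id_eq, neg_smul, neg_mul, mul_neg, smul_mul_assoc, mul_smul_comm,
    zero_smul]
  constructor
  · rw [h.star_gamma_mul_star_alpha, smul_smul, inv_mul_cancel₀ hq, one_smul, neg_add_cancel]
  · rw [h.star_gamma_mul_alpha hq, add_neg_cancel]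

end SUq

/-- With `m : 𝒜 ⊗ 𝒜 → 𝒜` the multiplication map, for all `a ∈ 𝒜`:
`m((S⊗id)(Δ a)) = ε(a)·1 = m((id⊗S)(Δ a))`, i.e. the antipode is the two-sided convolution
inverse of the identity. -/
theorem suq_antipode_convolution_inverse {A : Type*} [Ring A] [Algebra ℂ A] [StarRing A]
    [StarModule ℂ A]
    (q : ℂ) (hq0 : 0 < ‖q‖) (hq1 : ‖q‖ < 1)
    (a g : A) (hrel : SUqRel q a g) (hbasis : SUqBasis a g)
    (μ : A ⊗[ℂ] A →ₗ[ℂ] A ⊗[ℂ] A →ₗ[ℂ] A ⊗[ℂ] A) (hμ : SUqBraidedMul q a g μ)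
    (Δ : A →ₗ[ℂ] A ⊗[ℂ] A) (hΔ : SUqComul q a g μ Δ)
    (S : A →ₗ[ℂ] A) (hS : SUqAntipode q a g S)
    (ε : A →ₐ[ℂ] ℂ) (hεa : ε a = 1) (hεg : ε g = 0) :
    ∀ x : A,
      (LinearMap.mul' ℂ A) ((TensorProduct.map S LinearMap.id) (Δ x)) = ε x • 1 ∧
      (LinearMap.mul' ℂ A) ((TensorProduct.map LinearMap.id S) (Δ x)) = ε x • 1 := by
  have hq : q ≠ 0 := norm_pos_iff.mp hq0
  have hq1' : q ≠ 1 := by rintro rfl; simp at hq1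
  have hζ : q / starRingEnd ℂ q ≠ 0 := div_ne_zero hq ((map_ne_zero _).mpr hq)
  have hSmul : IsBraidedAntiMul (suqHomog a g) (q / starRingEnd ℂ q) S := hS.2.2.2.2.2.2
  have := hrel.gradedMul hq
  have hεgs := hrel.counit_star_gamma hq1' hεa
  have antipode_mul {p r : ℤ} {x y : A} (hx : x ∈ suqHomog a g p) (hy : y ∈ suqHomog a g r) :
      IsAntipodeAt Δ S ε x → IsAntipodeAt Δ S ε y → IsAntipodeAt Δ S ε (x * y) :=
    IsAntipodeAt.mul hζ hμ hSmul hΔ.2.1 (hΔ.map_mem_gradedTensor hμ hx)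
      (hΔ.map_mem_gradedTensor hμ hy) (counit_eq_zero_of_mem_suqHomog hεg hεgs · hx)
      (counit_eq_zero_of_mem_suqHomog hεg hεgs · hy)
  have mono := suqMono_induction a g
    (P := fun p x => x ∈ suqHomog a g p ∧ IsAntipodeAt Δ S ε x)
    ⟨one_mem_suqHomog, isAntipodeAt_one hΔ hS⟩
    ⟨alpha_mem_suqHomog, isAntipodeAt_alpha hrel hq hΔ hS hεa⟩
    ⟨star_alpha_mem_suqHomog, isAntipodeAt_star_alpha hrel hq hΔ hS hεa hεg⟩
    ⟨gamma_mem_suqHomog, isAntipodeAt_gamma hrel hΔ hS hεg⟩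
    ⟨star_gamma_mem_suqHomog, isAntipodeAt_star_gamma hrel hq hq1' hΔ hS hεa⟩
    fun ⟨hx, hxS⟩ ⟨hy, hyS⟩ => ⟨SetLike.mul_mem_graded hx hy, antipode_mul hx hy hxS hyS⟩
  exact isAntipodeAt_of_span_eq_top hbasis.2 (by rintro _ ⟨i, rfl⟩; exact (mono i).2)
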